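/- Let k₀ be a field containing a primitive m-th root of unity where m is prime, let q ∈ k₀^× with q ≠ 1, let K = k₀(y), and let σ be the k₀-automorphism of K with σ(y) = qy. Let a ∈ k₀[y] be a nonzero polynomial with m not dividing deg_y(a). Then σ^{m−1}(b)·σ^{m−2}(b)⋯σ(b)·b ≠ a for all b ∈ K, and the algebra S_f on K^m associated with f(t) = t^m − a has no nonzero zero divisors; in fact right multiplication by every nonzero element of S_f is bijective. -/

import Mathlib

/-!
Give `t` the fractional degree `deg a / m`, so that `x tⁱ` has degree `deg x + i deg a / m`.
Since `σ` preserves degrees, the degree of a product of monomials is the sum of their degrees,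
and since `m` is prime and `m ∤ deg a`, monomials `x tⁱ` with different `i` have different
degrees. Hence every nonzero element of `S_f` has a unique leading monomial, and the product of
the leading monomials of `u` and `v` cannot cancel in `u ∘ v`. The same degree count shows that
`σ^{m-1}(b) ⋯ σ(b) b` has degree `m deg b ≠ deg a`. Right multiplication by a nonzero element
is then an injective `K`-linear endomorphism of `K^m`, hence bijective.
-/

open Finset

/-- Coordinates of the product in the algebra `S_f`, `f(t) = t^m − A ∈ K[t;σ]`,
`K = k₀(y)`: `(x t^i) ∘ (z t^j) = x σ^i(z) t^{i+j}` if `i+j < m` and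
`(x t^i) ∘ (z t^j) = x σ^i(z) σ^{i+j−m}(A) t^{i+j−m}` if `i+j ≥ m`. -/
noncomputable def cycMulRf (k₀ : Type*) [Field k₀] (m : ℕ)
    (σ : RatFunc k₀ →+* RatFunc k₀) (A : RatFunc k₀)
    (u v : Fin m → RatFunc k₀) : Fin m → RatFunc k₀ :=
  fun k =>
    (∑ i : Fin m, ∑ j : Fin m,
        if (i : ℕ) + (j : ℕ) = (k : ℕ) then u i * (⇑σ)^[(i : ℕ)] (v j) else 0) +
      ∑ i : Fin m, ∑ j : Fin m,
        if (i : ℕ) + (j : ℕ) = (k : ℕ) + m then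
          u i * (⇑σ)^[(i : ℕ)] (v j) * (⇑σ)^[(k : ℕ)] A
        else 0

namespace RatFunc

open Polynomial

variable {K : Type*} [Field K]

theorem intDegree_sum_lt {ι : Type*} {s : Finset ι} {f : ι → RatFunc K} {D : ℤ}
    (h : ∀ i ∈ s, f i ≠ 0 → (f i).intDegree < D) :
    ∑ i ∈ s, f i ≠ 0 → (∑ i ∈ s, f i).intDegree < D := by
  refine Finset.sum_induction f (fun x => x ≠ 0 → x.intDegree < D) ?_ (by simp) h
  intro x y hx hy hxy
  rcases eq_or_ne y 0 with rfl | hy0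
  · simpa using hx (by simpa using hxy)
  rcases eq_or_ne x 0 with rfl | hx0
  · simpa using hy (by simpa using hxy)
  exact (intDegree_add_le hy0 hxy).trans_lt (max_lt (hx hx0) (hy hy0))

theorem sum_ne_zero_of_intDegree_lt {ι : Type*} [DecidableEq ι] {s : Finset ι}
    {f : ι → RatFunc K} {i₀ : ι} (hi₀ : i₀ ∈ s) (hf : f i₀ ≠ 0)
    (h : ∀ i ∈ s, i ≠ i₀ → f i ≠ 0 → (f i).intDegree < (f i₀).intDegree) :
    ∑ i ∈ s, f i ≠ 0 := by
  rw [← add_sum_erase s f hi₀]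
  intro hsum
  have hrest : ∑ i ∈ s.erase i₀, f i = -f i₀ := eq_neg_of_add_eq_zero_right hsum
  have hlt := intDegree_sum_lt (fun i hi => h i (mem_of_mem_erase hi) (ne_of_mem_erase hi))
    (by rw [hrest]; exact neg_ne_zero.mpr hf)
  rw [hrest, intDegree_neg] at hlt
  exact hlt.false

theorem intDegree_map_eq_of_map_X {q : K} (hq : q ≠ 0) {σ : RatFunc K →+* RatFunc K}
    (hσC : ∀ c : K, σ (C c) = C c) (hσX : σ X = C q * X) (x : RatFunc K) :
    (σ x).intDegree = x.intDegree := by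
  have hσ_poly (p : K[X]) :
      σ (algebraMap K[X] (RatFunc K) p) = algebraMap K[X] (RatFunc K) (p.comp (.C q * .X)) := by
    have : σ.comp (algebraMap K[X] (RatFunc K))
        = (algebraMap K[X] (RatFunc K)).comp (compRingHom (.C q * .X)) := by
      ext <;> simp [hσC, hσX, algebraMap_C, algebraMap_X]
    exact congr($this p)
  have hdeg (p : K[X]) : (σ (algebraMap K[X] (RatFunc K) p)).intDegree = p.natDegree := by
    rw [hσ_poly, intDegree_polynomial, natDegree_comp, natDegree_C_mul_X q hq, mul_one]
  rcases eq_or_ne x 0 with rfl | hx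
  · simp
  have hnum := algebraMap_ne_zero (num_ne_zero hx)
  have hden := algebraMap_ne_zero x.denom_ne_zero
  rw [← num_div_denom x, map_div₀, intDegree_div ((_root_.map_ne_zero σ).mpr hnum)
    ((_root_.map_ne_zero σ).mpr hden), hdeg, hdeg, intDegree_div hnum hden, intDegree_polynomial,
    intDegree_polynomial]

end RatFunc

theorem Fin.eq_of_natCast_mul_add_mul_eq {m : ℕ} (hm : m.Prime) {e : ℤ} (he : ¬ (m : ℤ) ∣ e)
    {i i' : Fin m} {d d' : ℤ} (h : m * d + i * e = m * d' + i' * e) : i = i' := by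
  have hcop : IsCoprime (m : ℤ) e :=
    (Irreducible.coprime_iff_not_dvd (Nat.prime_iff_prime_int.mp hm).irreducible).mpr he
  have hdvd : (m : ℤ) ∣ ((i : ℤ) - i') := hcop.dvd_of_dvd_mul_right ⟨d' - d, by linarith⟩
  have hi := i.isLt
  have hi' := i'.isLt
  have := Int.eq_zero_of_abs_lt_dvd hdvd (abs_lt.mpr ⟨by omega, by omega⟩)
  exact Fin.ext (by omega)

theorem iterate_map_ne_zero {R : Type*} [DivisionRing R] (σ : R →+* R) (n : ℕ) {x : R}
    (hx : x ≠ 0) : σ^[n] x ≠ 0 := by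
  rw [← RingHom.coe_pow]
  exact (map_ne_zero _).mpr hx

section Iterate

variable {K : Type*} [Field K] {σ : RatFunc K →+* RatFunc K}

theorem RatFunc.intDegree_iterate (hσ : ∀ x, (σ x).intDegree = x.intDegree) (n : ℕ)
    (x : RatFunc K) : (σ^[n] x).intDegree = x.intDegree := by
  induction n with
  | zero => rfl
  | succ n ih => rw [Function.iterate_succ_apply', hσ, ih]

theorem RatFunc.intDegree_prod_iterate (hσ : ∀ x, (σ x).intDegree = x.intDegree) (n : ℕ)
    (b : RatFunc K) : (∏ l ∈ range n, σ^[l] b).intDegree = n * b.intDegree := by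
  rcases eq_or_ne b 0 with rfl | hb
  · cases n <;> simp [iterate_map_zero]
  induction n with
  | zero => simp
  | succ n ih =>
    rw [prod_range_succ, RatFunc.intDegree_mul (prod_ne_zero_iff.mpr fun l _ =>
      iterate_map_ne_zero σ l hb) (iterate_map_ne_zero σ n hb), ih, intDegree_iterate hσ]
    push_cast
    ring

theorem prod_iterate_ne_of_not_dvd (hσ : ∀ x, (σ x).intDegree = x.intDegree) {n : ℕ}
    {A : RatFunc K} (hA : ¬ (n : ℤ) ∣ A.intDegree) (b : RatFunc K) :
    ∏ l ∈ range n, σ^[l] b ≠ A := fun h =>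
  hA ⟨b.intDegree, by rw [← h, RatFunc.intDegree_prod_iterate hσ]⟩

end Iterate

section CyclicAlgebra

open Matrix

variable {k₀ : Type*} [Field k₀] {m : ℕ} (σ : RatFunc k₀ →+* RatFunc k₀) (A : RatFunc k₀)

/-- `(u ∘ v)_k = ∑ᵢ uᵢ σⁱ(v_{k-i}) σᵏ(A)^[k < i]`: the product of `uᵢ tⁱ` and `v_j t^j` lands in
coordinate `i + j mod m`, passing through `t^m = A` exactly when `k < i`. -/
noncomputable def rightMulMatrix (v : Fin m → RatFunc k₀) : Matrix (Fin m) (Fin m) (RatFunc k₀) :=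
  fun i k => σ^[i] (v (k - i)) * if (k : ℕ) < i then σ^[k] A else 1

theorem cycMulRf_eq_vecMul (u v : Fin m → RatFunc k₀) :
    cycMulRf k₀ m σ A u v = u ᵥ* rightMulMatrix σ A v := by
  funext k
  simp only [cycMulRf, ← sum_add_distrib]
  refine sum_congr rfl fun i _ => ?_
  dsimp only [rightMulMatrix]
  have hk := k.isLt
  have hi := i.isLt
  rw [sum_eq_single (k - i)]
  · rcases lt_or_ge (k : ℕ) i with h | h
    · have hsub : ((k - i : Fin m) : ℕ) = m + k - i := Fin.coe_sub_iff_lt.mpr h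
      rw [if_neg (by omega), if_pos (by omega), if_pos h, zero_add, mul_assoc]
    · have hsub : ((k - i : Fin m) : ℕ) = k - i := Fin.coe_sub_iff_le.mpr h
      rw [if_pos (by omega), if_neg (by omega), if_neg (by omega), add_zero, mul_one]
  · intro j _ hj
    have : (i : ℕ) + j ≠ k ∧ (i : ℕ) + j ≠ k + m := by
      constructor <;> intro h <;> apply hj <;> ext
      · rw [Fin.coe_sub_iff_le.mpr (by omega)]; omega
      · rw [Fin.coe_sub_iff_lt.mpr (by omega)]; omega
    rw [if_neg this.1, if_neg this.2, add_zero]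
  · simp

/-- `m` times the degree of `w i • tⁱ` when `t` is given the degree `e / m`. -/
noncomputable def weightedDegree (e : ℤ) (w : Fin m → RatFunc k₀) (i : Fin m) : ℤ :=
  m * (w i).intDegree + i * e

theorem exists_weightedDegree_max (e : ℤ) {w : Fin m → RatFunc k₀} (hw : w ≠ 0) :
    ∃ i₀, w i₀ ≠ 0 ∧ ∀ i, w i ≠ 0 → weightedDegree e w i ≤ weightedDegree e w i₀ := by
  classical
  obtain ⟨i₁, hi₁⟩ := Function.ne_iff.mp hw
  obtain ⟨i₀, hi₀, hmax⟩ :=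
    (univ.filter (w · ≠ 0)).exists_max_image (weightedDegree e w) ⟨i₁, by simpa using hi₁⟩
  exact ⟨i₀, (mem_filter.mp hi₀).2, fun i hi => hmax i (by simpa using hi)⟩

variable {σ A}

theorem intDegree_mul_rightMulMatrix (hσ : ∀ x, (σ x).intDegree = x.intDegree) (hA : A ≠ 0)
    {u v : Fin m → RatFunc k₀} {i k : Fin m} (hu : u i ≠ 0) (hv : v (k - i) ≠ 0) :
    u i * rightMulMatrix σ A v i k ≠ 0 ∧
      m * (u i * rightMulMatrix σ A v i k).intDegree + k * A.intDegree =
        weightedDegree A.intDegree u i + weightedDegree A.intDegree v (k - i) := by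
  have hσv := iterate_map_ne_zero σ i hv
  have hσA : (if (k : ℕ) < i then σ^[k] A else 1) ≠ 0 := by
    split_ifs
    exacts [iterate_map_ne_zero σ _ hA, one_ne_zero]
  refine ⟨mul_ne_zero hu (mul_ne_zero hσv hσA), ?_⟩
  dsimp only [rightMulMatrix]
  rw [RatFunc.intDegree_mul hu (mul_ne_zero hσv hσA),
    RatFunc.intDegree_mul hσv hσA, RatFunc.intDegree_iterate hσ, weightedDegree, weightedDegree]
  have hk := k.isLt
  have hi := i.isLt
  split_ifs with h
  · have hsub : ((k - i : Fin m) : ℕ) = m + k - i := Fin.coe_sub_iff_lt.mpr h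
    have hsub' : ((k - i : Fin m) : ℤ) = m + k - i := by omega
    rw [RatFunc.intDegree_iterate hσ, hsub']
    ring
  · have hsub : ((k - i : Fin m) : ℕ) = k - i := Fin.coe_sub_iff_le.mpr (not_lt.mp h)
    have hsub' : ((k - i : Fin m) : ℤ) = k - i := by omega
    rw [RatFunc.intDegree_one, hsub']
    ring

/-- Only the product of the leading monomials contributes to the top degree of the
`(i₀ + j₀)`-th coordinate, since the weighted degrees of distinct monomials differ. -/
theorem cycMulRf_ne_zero (hm : m.Prime) (hσ : ∀ x, (σ x).intDegree = x.intDegree)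
    (hA : ¬ (m : ℤ) ∣ A.intDegree) {u v : Fin m → RatFunc k₀} (hu : u ≠ 0) (hv : v ≠ 0) :
    cycMulRf k₀ m σ A u v ≠ 0 := by
  have : NeZero m := ⟨hm.ne_zero⟩
  have hA0 : A ≠ 0 := by rintro rfl; simp at hA
  obtain ⟨i₀, hu₀, hmax_u⟩ := exists_weightedDegree_max A.intDegree hu
  obtain ⟨j₀, hv₀, hmax_v⟩ := exists_weightedDegree_max A.intDegree hv
  set k := i₀ + j₀
  have hj₀ : k - i₀ = j₀ := add_sub_cancel_left i₀ j₀
  obtain ⟨hT₀, hdeg₀⟩ := intDegree_mul_rightMulMatrix hσ hA0 hu₀ (hj₀ ▸ hv₀)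
  rw [hj₀] at hdeg₀
  intro h
  have hk := congrFun h k
  rw [cycMulRf_eq_vecMul] at hk
  refine RatFunc.sum_ne_zero_of_intDegree_lt (mem_univ i₀) hT₀ (fun i _ hi hT => ?_) hk
  have hui : u i ≠ 0 := left_ne_zero_of_mul hT
  have hvi : v (k - i) ≠ 0 := fun h0 => hT (by simp [rightMulMatrix, h0, iterate_map_zero])
  obtain ⟨-, hdeg⟩ := intDegree_mul_rightMulMatrix hσ hA0 hui hvi
  have hlt_u : weightedDegree A.intDegree u i < weightedDegree A.intDegree u i₀ :=
    (hmax_u i hui).lt_of_ne fun heq => hi (Fin.eq_of_natCast_mul_add_mul_eq hm hA heq)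
  have hle_v := hmax_v _ hvi
  have hlt : (m : ℤ) * (u i * rightMulMatrix σ A v i k).intDegree
      < m * (u i₀ * rightMulMatrix σ A v i₀ k).intDegree := by linarith
  exact lt_of_mul_lt_mul_left hlt (by positivity)

theorem cycMulRf_left_bijective (hm : m.Prime) (hσ : ∀ x, (σ x).intDegree = x.intDegree)
    (hA : ¬ (m : ℤ) ∣ A.intDegree) {v : Fin m → RatFunc k₀} (hv : v ≠ 0) :
    Function.Bijective fun u => cycMulRf k₀ m σ A u v := by
  have hinj : Function.Injective (rightMulMatrix σ A v).vecMulLinear := by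
    refine (injective_iff_map_eq_zero _).mpr fun u hu => ?_
    by_contra hu0
    exact cycMulRf_ne_zero hm hσ hA hu0 hv (by rwa [cycMulRf_eq_vecMul])
  rw [show (fun u => cycMulRf k₀ m σ A u v) = (rightMulMatrix σ A v).vecMulLinear from
    funext fun u => cycMulRf_eq_vecMul σ A u v]
  exact ⟨hinj, LinearMap.injective_iff_surjective.mp hinj⟩

end CyclicAlgebra

theorem stmt15_general (k₀ : Type*) [Field k₀] (m : ℕ) (hm : Nat.Prime m)
    (q : k₀) (hq0 : q ≠ 0)
    (σ : RatFunc k₀ →+* RatFunc k₀)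
    (hσC : ∀ c : k₀, σ (RatFunc.C c) = RatFunc.C c)
    (hσX : σ RatFunc.X = RatFunc.C q * RatFunc.X)
    (a : Polynomial k₀) (hdeg : ¬(m ∣ a.natDegree)) :
    (∀ b : RatFunc k₀,
      (∏ l ∈ Finset.range m, (⇑σ)^[l] b) ≠ algebraMap (Polynomial k₀) (RatFunc k₀) a) ∧
    (∀ u v : Fin m → RatFunc k₀,
      cycMulRf k₀ m σ (algebraMap (Polynomial k₀) (RatFunc k₀) a) u v = 0 →
        u = 0 ∨ v = 0) ∧
    (∀ g : Fin m → RatFunc k₀, g ≠ 0 →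
      Function.Bijective fun h =>
        cycMulRf k₀ m σ (algebraMap (Polynomial k₀) (RatFunc k₀) a) h g) := by
  have hσ := RatFunc.intDegree_map_eq_of_map_X hq0 hσC hσX
  have hA : ¬ (m : ℤ) ∣ (algebraMap (Polynomial k₀) (RatFunc k₀) a).intDegree := by
    rwa [RatFunc.intDegree_polynomial, Int.natCast_dvd_natCast]
  refine ⟨prod_iterate_ne_of_not_dvd hσ hA, fun u v huv => ?_,
    fun g hg => cycMulRf_left_bijective hm hσ hA hg⟩
  by_contra! h
  exact cycMulRf_ne_zero hm hσ hA h.1 h.2 huv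

/-- Let `k₀` contain a primitive `m`-th root of unity (`m` prime), let
`q ∈ k₀^×` with `q ≠ 1`, `K = k₀(y)`, and `σ` the `k₀`-automorphism of `K` with
`σ(y) = qy`. Let `a ∈ k₀[y]` be nonzero with `m ∤ deg_y(a)`. Then
`σ^{m−1}(b)⋯σ(b)·b ≠ a` for all `b ∈ K`, the algebra `S_f` for `f(t) = t^m − a` has no
nonzero zero divisors, and right multiplication by every nonzero element is bijective. -/
theorem stmt15 (k₀ : Type*) [Field k₀] (m : ℕ) (hm : Nat.Prime m)
    (ω : k₀) (hω : IsPrimitiveRoot ω m)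
    (q : k₀) (hq0 : q ≠ 0) (hq1 : q ≠ 1)
    (σ : RatFunc k₀ →+* RatFunc k₀) (hσsurj : Function.Surjective σ)
    (hσC : ∀ c : k₀, σ (RatFunc.C c) = RatFunc.C c)
    (hσX : σ RatFunc.X = RatFunc.C q * RatFunc.X)
    (a : Polynomial k₀) (ha : a ≠ 0) (hdeg : ¬(m ∣ a.natDegree)) :
    (∀ b : RatFunc k₀,
      (∏ l ∈ Finset.range m, (⇑σ)^[l] b) ≠ algebraMap (Polynomial k₀) (RatFunc k₀) a) ∧
    (∀ u v : Fin m → RatFunc k₀,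
      cycMulRf k₀ m σ (algebraMap (Polynomial k₀) (RatFunc k₀) a) u v = 0 →
        u = 0 ∨ v = 0) ∧
    (∀ g : Fin m → RatFunc k₀, g ≠ 0 →
      Function.Bijective fun h =>
        cycMulRf k₀ m σ (algebraMap (Polynomial k₀) (RatFunc k₀) a) h g) :=
  stmt15_general k₀ m hm q hq0 σ hσC hσX a hdeg
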